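/- Monotonicity of the contraction factor in the overlap: fix ν > 0 and γ₂ ∈ (0,1); then the product ρ(γ₁) = [(e^{γ₂/ν}-1)(e^{1/ν}-e^{γ₁/ν})]/[(e^{γ₁/ν}-1)(e^{1/ν}-e^{γ₂/ν})] is strictly decreasing in γ₁ on (γ₂, 1). -/

import Mathlib

/-! With `t = exp (γ₁ / ν)` and `E = exp (1 / ν)`, the contraction factor is a positive constant
times `(E - t) / (t - 1) = (E - 1) / (t - 1) - 1`, which decreases in `t > 1`; and `t` increases
with `γ₁`. -/

open Real Set

lemma strictAntiOn_sub_div_sub_one {E : ℝ} (hE : 1 < E) :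
    StrictAntiOn (fun t => (E - t) / (t - 1)) (Ioi 1) := by
  intro a (ha : 1 < a) b (hb : 1 < b) hab
  rw [div_lt_div_iff₀ (sub_pos.mpr hb) (sub_pos.mpr ha)]
  -- the cross-multiplied difference is `(E - 1) * (b - a)`
  nlinarith [mul_pos (sub_pos.mpr hE) (sub_pos.mpr hab)]

lemma strictMono_exp_div {ν : ℝ} (hν : 0 < ν) : StrictMono fun x => exp (x / ν) :=
  exp_strictMono.comp (strictMono_div_right_of_pos hν)

lemma one_lt_exp_div {x ν : ℝ} (hx : 0 < x) (hν : 0 < ν) : 1 < exp (x / ν) :=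
  one_lt_exp_iff.mpr (div_pos hx hν)

theorem schwarz_contraction_strictAnti_in_overlap (ν γ₂ : ℝ) (hν : 0 < ν)
    (h0 : 0 < γ₂) (h1 : γ₂ < 1)
    (ρ : ℝ → ℝ)
    (hρ : ρ = fun γ₁ =>
      (exp (γ₂ / ν) - 1) * (exp (1 / ν) - exp (γ₁ / ν)) /
        ((exp (γ₁ / ν) - 1) * (exp (1 / ν) - exp (γ₂ / ν)))) :
    StrictAntiOn ρ (Ioo γ₂ 1) := by
  set E := exp (1 / ν)
  set C := (exp (γ₂ / ν) - 1) / (E - exp (γ₂ / ν))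
  have hC : 0 < C := div_pos (sub_pos.mpr (one_lt_exp_div h0 hν))
    (sub_pos.mpr (strictMono_exp_div hν h1))
  have hρ' : ρ = fun γ₁ => (E - exp (γ₁ / ν)) / (exp (γ₁ / ν) - 1) * C := by
    rw [hρ]; ext γ₁; rw [div_mul_div_comm, mul_comm (E - _)]
  have hmaps : MapsTo (fun x => exp (x / ν)) (Ioo γ₂ 1) (Ioi 1) :=
    fun x hx => one_lt_exp_div (h0.trans hx.1) hν
  have hanti := (strictAntiOn_sub_div_sub_one (one_lt_exp_div one_pos hν)).comp_strictMonoOn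
    ((strictMono_exp_div hν).strictMonoOn _) hmaps
  rw [hρ']
  exact fun a ha b hb hab => mul_lt_mul_of_pos_right (hanti ha hb hab) hC
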